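/- (Inversion for abstraction) If Γ ⊢ λx.t : T is derivable, then there exist m ≥ 1 and types T_i, T'_i (i ∈ 1..m) such that T ≡ ⋀_{i∈1..m} (T_i → T'_i)^0 and Γ, x:T_i ⊢ t : T'_i for each i. -/

import Mathlib

set_option linter.unusedVariables false

-- Primitive types and term types of the unbind/rebind calculus.
mutual
inductive PrimTy : Type where
  | int : PrimTy
  | code : PrimTy
  | arrow : Ty → Ty → PrimTy
inductive Ty : Type where
  | prim : PrimTy → ℕ → Ty
  | inter : Ty → Ty → Ty
end

/-- `T.raise k` increases all top-level conjunct levels by `k` (written `T^{+k}`). -/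
def Ty.raise : Ty → ℕ → Ty
  | .prim τ ℓ, k => .prim τ (ℓ + k)
  | .inter T1 T2, k => .inter (T1.raise k) (T2.raise k)

/-- Congruence on types. -/
inductive TyEq : Ty → Ty → Prop where
  | refl : TyEq T T
  | symm : TyEq T1 T2 → TyEq T2 T1
  | trans : TyEq T1 T2 → TyEq T2 T3 → TyEq T1 T3
  | interCongr : TyEq T1 T1' → TyEq T2 T2' → TyEq (.inter T1 T2) (.inter T1' T2')
  | arrowCongr : TyEq T1 T1' → TyEq T2 T2' →
      TyEq (.prim (.arrow T1 T2) ℓ) (.prim (.arrow T1' T2') ℓ)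
  | idem : TyEq T (.inter T T)
  | comm : TyEq (.inter T1 T2) (.inter T2 T1)
  | assoc : TyEq (.inter T1 (.inter T2 T3)) (.inter (.inter T1 T2) T3)
  | distrib : TyEq (.inter (.prim (.arrow T T1) ℓ) (.prim (.arrow T T2) ℓ))
      (.prim (.arrow T (.inter T1 T2)) ℓ)
  | shift : TyEq (.prim (.arrow T' (Ty.raise T ℓ')) (ℓ+1)) (.prim (.arrow T' (Ty.raise T (ℓ'+1))) ℓ)

/-- Subtyping on types. -/
inductive TySub : Ty → Ty → Prop where
  | int : TySub (.prim .int ℓ) (.prim .int (ℓ+1))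
  | interElim : TySub (.inter T1 T2) T1
  | arrow : TySub T2 T1 → TySub T1' T2' →
      TySub (.prim (.arrow T1 T1') ℓ) (.prim (.arrow T2 T2') ℓ)
  | mono : TySub T1 T1' → TySub T2 T2' → TySub (.inter T1 T2) (.inter T1' T2')
  | trans : TySub T1 T2 → TySub T2 T3 → TySub T1 T3
  | ofEq : TyEq T1 T2 → TySub T1 T2

/-- Value types: intersections with at least one conjunct of level 0. -/
inductive IsValueTy : Ty → Prop where
  | prim : IsValueTy (.prim τ 0)
  | inter : IsValueTy V → IsValueTy (.inter V T)

/-- `bigInter T Ts` is the intersection of the nonempty family `T :: Ts`. -/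
def bigInter : Ty → List Ty → Ty
  | T, [] => T
  | T, T' :: Ts => .inter T (bigInter T' Ts)

abbrev TCtx := List (String × Ty)

/-- Terms of the unbind/rebind calculus. -/
inductive Tm : Type where
  | var : String → Tm
  | num : ℤ → Tm
  | add : Tm → Tm → Tm
  | lam : String → Tm → Tm
  | app : Tm → Tm → Tm
  | unbind : TCtx → Tm → Tm
  | rebind : Tm → List (String × Ty × Tm) → Tm
  | error : Tm

abbrev TSubst := List (String × Ty × Tm)
abbrev USubst := List (String × Tm)

inductive IsValue : Tm → Prop where
  | lam : IsValue (.lam x t)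
  | unbind : IsValue (.unbind Γ t)
  | num : IsValue (.num n)

mutual
/-- Free variables of a term. -/
def FV : Tm → Finset String
  | .var x => {x}
  | .num _ => ∅
  | .add t1 t2 => FV t1 ∪ FV t2
  | .lam x t => FV t \ {x}
  | .app t1 t2 => FV t1 ∪ FV t2
  | .unbind Γ' t => FV t \ (Γ'.map Prod.fst).toFinset
  | .rebind t r => FV t ∪ FVr r
  | .error => ∅
/-- Free variables of a typed substitution. -/
def FVr : List (String × Ty × Tm) → Finset String
  | [] => ∅
  | p :: r => FV p.2.2 ∪ FVr r
end

/-- Free variables of an untyped substitution. -/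
def FVu (σ : USubst) : Finset String := σ.foldr (fun p acc => FV p.2 ∪ acc) ∅

mutual
/-- `SubstM t σ t'` : the (capture-avoiding, partial) application of the
substitution `σ` to `t` is defined and equals `t'`. -/
inductive SubstM : Tm → USubst → Tm → Prop where
  | varHit : σ.lookup x = some v → SubstM (.var x) σ v
  | varMiss : σ.lookup x = none → SubstM (.var x) σ (.var x)
  | num : SubstM (.num n) σ (.num n)
  | error : SubstM .error σ .error
  | add : SubstM t1 σ t1' → SubstM t2 σ t2' → SubstM (.add t1 t2) σ (.add t1' t2')
  | app : SubstM t1 σ t1' → SubstM t2 σ t2' → SubstM (.app t1 t2) σ (.app t1' t2')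
  | lam : x ∉ FVu σ → SubstM t (σ.filter (fun p => p.1 != x)) t' →
      SubstM (.lam x t) σ (.lam x t')
  | unbind : (∀ y ∈ Γ'.map Prod.fst, y ∉ FVu σ) →
      SubstM t (σ.filter (fun p => !(Γ'.map Prod.fst).contains p.1)) t' →
      SubstM (.unbind Γ' t) σ (.unbind Γ' t')
  | rebind : SubstM t σ t' → SubstML r σ r' → SubstM (.rebind t r) σ (.rebind t' r')
inductive SubstML : TSubst → USubst → TSubst → Prop where
  | nil : SubstML [] σ []
  | cons : SubstM u σ u' → SubstML r σ r' → SubstML ((x,T,u) :: r) σ ((x,T,u') :: r')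
end

mutual
/-- The intersection type system with levels. -/
inductive Typed : TCtx → Tm → Ty → Prop where
  | var : Γ.lookup x = some T → Typed Γ (.var x) T
  | num : Typed Γ (.num n) (.prim .int 0)
  | sum : Typed Γ t1 (.prim .int ℓ) → Typed Γ t2 (.prim .int ℓ) →
      Typed Γ (.add t1 t2) (.prim .int ℓ)
  | error : Typed Γ .error T
  | abs : Γ.lookup x = none → Typed ((x,T) :: Γ) t T' →
      Typed Γ (.lam x t) (.prim (.arrow T T') 0)
  | app : Typed Γ t1 (.prim (.arrow V T) 0) → IsValueTy V → Typed Γ t2 V →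
      Typed Γ (.app t1 t2) T
  | unbind0 : (∀ x ∈ Γ'.map Prod.fst, Γ.lookup x = none) → Typed (Γ' ++ Γ) t T →
      Typed Γ (.unbind Γ' t) (.prim .code 0)
  | unbind : (∀ x ∈ Γ'.map Prod.fst, Γ.lookup x = none) → Typed (Γ' ++ Γ) t T →
      Typed Γ (.unbind Γ' t) (T.raise 1)
  | rebind : Typed Γ t (T.raise 1) → SubstOk Γ r → Typed Γ (.rebind t r) T
  | inter : Typed Γ t T1 → Typed Γ t T2 → Typed Γ t (.inter T1 T2)
  | sub : Typed Γ t T → TySub T T' → Typed Γ t T'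
/-- `SubstOk Γ r` : the typed substitution `r` is well typed in `Γ`. -/
inductive SubstOk : TCtx → TSubst → Prop where
  | nil : SubstOk Γ []
  | cons : Typed Γ u V → IsValueTy V → TySub V T → SubstOk Γ r →
      SubstOk Γ ((x,T,u) :: r)
end

/-- All terms of a typed substitution are values. -/
def IsValSubst (r : TSubst) : Prop := ∀ p ∈ r, IsValue p.2.2

/-- `Γ' ⊆` the type context extracted from `r`. -/
def CtxSub (Γ' : TCtx) (r : TSubst) : Prop := ∀ x T, (x,T) ∈ Γ' → ∃ u, (x,T,u) ∈ r

/-- The untyped substitution extracted from `r`, restricted to variables in `xs`. -/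
def restrictTo (r : TSubst) (xs : List String) : USubst :=
  (r.filter (fun p => xs.contains p.1)).map (fun p => (p.1, p.2.2))

/-- Evaluation contexts. -/
inductive ECtx : Type where
  | hole : ECtx
  | addL : ECtx → Tm → ECtx
  | addR : ℤ → ECtx → ECtx
  | appL : ECtx → Tm → ECtx
  | appR : Tm → ECtx → ECtx
  | reb : Tm → TSubst → String → Ty → ECtx → ECtx

def plug : ECtx → Tm → Tm
  | .hole, u => u
  | .addL E t, u => .add (plug E u) t
  | .addR n E, u => .add (.num n) (plug E u)
  | .appL E t, u => .app (plug E u) t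
  | .appR v E, u => .app v (plug E u)
  | .reb t r x T E, u => .rebind t (r ++ [(x, T, plug E u)])

/-- Well-formed evaluation contexts (`v E` requires `v` a value). -/
inductive IsECtx : ECtx → Prop where
  | hole : IsECtx .hole
  | addL : IsECtx E → IsECtx (.addL E t)
  | addR : IsECtx E → IsECtx (.addR n E)
  | appL : IsECtx E → IsECtx (.appL E t)
  | appR : IsValue v → IsECtx E → IsECtx (.appR v E)
  | reb : IsECtx E → IsECtx (.reb t r x T E)

/-- Call-by-value reduction. -/
inductive Step : Tm → Tm → Prop where
  | sum : Step (.add (.num n1) (.num n2)) (.num (n1 + n2))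
  | app : IsValue v → SubstM t [(x, v)] t' → Step (.app (.lam x t) v) t'
  | rebindUnbindYes : IsValSubst r → CtxSub Γ' r →
      SubstM t (restrictTo r (Γ'.map Prod.fst)) t' →
      Step (.rebind (.unbind Γ' t) r) t'
  | rebindUnbindNo : IsValSubst r → ¬ CtxSub Γ' r →
      Step (.rebind (.unbind Γ' t) r) .error
  | rebindNum : IsValSubst r → Step (.rebind (.num n) r) (.num n)
  | rebindSum : IsValSubst r →
      Step (.rebind (.add t1 t2) r) (.add (.rebind t1 r) (.rebind t2 r))
  | rebindAbs : IsValSubst r → Step (.rebind (.lam x t) r) (.lam x (.rebind t r))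
  | rebindApp : IsValSubst r →
      Step (.rebind (.app t1 t2) r) (.app (.rebind t1 r) (.rebind t2 r))
  | rebindRebind : IsValSubst rv → Step (.rebind t r) t' →
      Step (.rebind (.rebind t r) rv) (.rebind t' rv)
  | rebindError : IsValSubst r → Step (.rebind .error r) .error
  | ctx : E ≠ .hole → IsECtx E → Step t t' → Step (plug E t) (plug E t')
  | ctxError : E ≠ .hole → IsECtx E → Step t .error → Step (plug E t) .error

/-- Level-0 arrow type from a pair of types. -/
def arr0 (p : Ty × Ty) : Ty := .prim (.arrow p.1 p.2) 0

/-- Primitive type with a level. -/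
def primL (p : PrimTy × ℕ) : Ty := .prim p.1 p.2

/-! Read a type as a conjunction of arrows, an arrow `(A → B)^ℓ` standing for its level-0 shift
`(A → B^{+ℓ})^0`, and call it *realized* by `λx.t` in `Γ` when every conjunct types the body:
`Γ, x:A ⊢ t : B^{+ℓ}`. The type produced by T-Abs is realized, T-Inter preserves realizability,
and so do `≡` and `≤`; for the contravariant domain of arrow subtyping this is the narrowing
lemma. A realized type is congruent to the intersection of the level-0 forms of its conjuncts. -/

@[simp]
lemma Ty.raise_zero : ∀ T : Ty, T.raise 0 = T
  | .prim _ _ => rfl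
  | .inter T1 T2 => by rw [Ty.raise, T1.raise_zero, T2.raise_zero]

lemma Ty.raise_raise : ∀ (T : Ty) (a b : ℕ), (T.raise a).raise b = T.raise (a + b)
  | .prim _ _, _, _ => by simp only [Ty.raise, Nat.add_assoc]
  | .inter T1 T2, a, b => by simp only [Ty.raise, T1.raise_raise, T2.raise_raise]

lemma TyEq.raise {A B : Ty} (h : TyEq A B) (k : ℕ) : TyEq (A.raise k) (B.raise k) := by
  induction h with
  | refl => exact .refl
  | symm _ ih => exact ih.symm
  | trans _ _ ih1 ih2 => exact ih1.trans ih2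
  | interCongr _ _ ih1 ih2 => exact .interCongr ih1 ih2
  | arrowCongr h1 h2 => exact .arrowCongr h1 h2
  | idem => exact .idem
  | comm => exact .comm
  | assoc => exact .assoc
  | distrib => exact .distrib
  | @shift _ _ _ ℓ =>
      show TyEq (.prim _ (ℓ + 1 + k)) (.prim _ (ℓ + k))
      rw [Nat.add_right_comm]
      exact .shift

lemma TySub.raise {A B : Ty} (h : TySub A B) (k : ℕ) : TySub (A.raise k) (B.raise k) := by
  induction h with
  | @int ℓ =>
      show TySub (.prim .int (ℓ + k)) (.prim .int (ℓ + 1 + k))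
      rw [Nat.add_right_comm]
      exact .int
  | interElim => exact .interElim
  | arrow h1 h2 => exact .arrow h1 h2
  | mono _ _ ih1 ih2 => exact .mono ih1 ih2
  | trans _ _ ih1 ih2 => exact ih1.trans ih2
  | ofEq h => exact .ofEq (h.raise k)

lemma TySub.inter_right {T1 T2 : Ty} : TySub (.inter T1 T2) T2 :=
  (TySub.ofEq .comm).trans .interElim

lemma TyEq.arrow_level_zero (A B : Ty) (ℓ : ℕ) :
    TyEq (.prim (.arrow A B) ℓ) (.prim (.arrow A (B.raise ℓ)) 0) := by
  induction ℓ generalizing B with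
  | zero => rw [B.raise_zero]; exact .refl
  | succ ℓ ih =>
      have hshift : TyEq (.prim (.arrow A B) (ℓ + 1)) (.prim (.arrow A (B.raise 1)) ℓ) := by
        simpa using @TyEq.shift A B 0 ℓ
      have hlevel := ih (B.raise 1)
      rw [Ty.raise_raise, Nat.add_comm 1 ℓ] at hlevel
      exact hshift.trans hlevel

lemma TyEq.inter_bigInter (A B : Ty) (l₁ l₂ : List Ty) :
    TyEq (.inter (bigInter A l₁) (bigInter B l₂)) (bigInter A (l₁ ++ B :: l₂)) := by
  induction l₁ generalizing A with
  | nil => exact .refl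
  | cons C l₁ ih => exact TyEq.assoc.symm.trans (.interCongr .refl (ih C))

lemma lookup_append_cons_eq_or (Δ Γ : TCtx) (x y : String) (A A' : Ty) :
    (Δ ++ (x, A') :: Γ).lookup y = (Δ ++ (x, A) :: Γ).lookup y ∨
      ((Δ ++ (x, A) :: Γ).lookup y = some A ∧ (Δ ++ (x, A') :: Γ).lookup y = some A') := by
  induction Δ with
  | nil => simp only [List.nil_append, List.lookup]; split <;> simp
  | cons b Δ ih => simp only [List.cons_append, List.lookup]; split <;> simp [ih]

lemma lookup_append_cons_eq_none {Δ Γ : TCtx} {x y : String} {A A' : Ty}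
    (h : (Δ ++ (x, A) :: Γ).lookup y = none) : (Δ ++ (x, A') :: Γ).lookup y = none := by
  rcases lookup_append_cons_eq_or Δ Γ x y A A' with heq | ⟨hA, -⟩
  · exact heq.trans h
  · cases hA.symm.trans h

lemma Typed.narrow_append {x : String} {A A' : Ty} {Γ : TCtx} (hA : TySub A' A)
    {Γ₀ : TCtx} {t : Tm} {B : Ty} (h : Typed Γ₀ t B) :
    ∀ Δ, Γ₀ = Δ ++ (x, A) :: Γ → Typed (Δ ++ (x, A') :: Γ) t B := by
  induction h using Typed.rec
    (motive_2 := fun Γ₀ r _ =>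
      ∀ Δ, Γ₀ = Δ ++ (x, A) :: Γ → SubstOk (Δ ++ (x, A') :: Γ) r) with
  | var hy =>
      rintro Δ rfl
      rcases lookup_append_cons_eq_or Δ Γ x _ A A' with heq | ⟨hA_lookup, hA'_lookup⟩
      · exact .var (heq.trans hy)
      · cases hA_lookup.symm.trans hy
        exact .sub (.var hA'_lookup) hA
  | num => exact fun _ _ => .num
  | sum _ _ ih1 ih2 => exact fun Δ hΓ => .sum (ih1 Δ hΓ) (ih2 Δ hΓ)
  | error => exact fun _ _ => .error
  | abs hy _ ih =>
      rintro Δ rfl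
      exact .abs (lookup_append_cons_eq_none hy) (ih (_ :: Δ) rfl)
  | app _ hV _ ih1 ih2 => exact fun Δ hΓ => .app (ih1 Δ hΓ) hV (ih2 Δ hΓ)
  | unbind0 hfresh _ ih =>
      rintro Δ rfl
      exact .unbind0 (fun y hy => lookup_append_cons_eq_none (hfresh y hy))
        (List.append_assoc _ Δ _ ▸ ih _ (List.append_assoc ..).symm)
  | unbind hfresh _ ih =>
      rintro Δ rfl
      exact .unbind (fun y hy => lookup_append_cons_eq_none (hfresh y hy))
        (List.append_assoc _ Δ _ ▸ ih _ (List.append_assoc ..).symm)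
  | rebind _ _ ih1 ih2 => exact fun Δ hΓ => .rebind (ih1 Δ hΓ) (ih2 Δ hΓ)
  | inter _ _ ih1 ih2 => exact fun Δ hΓ => .inter (ih1 Δ hΓ) (ih2 Δ hΓ)
  | sub _ hs ih => exact fun Δ hΓ => .sub (ih Δ hΓ) hs
  | nil => exact .nil
  | cons _ hV hs _ ih1 ih2 =>
      rename_i Δ hΓ
      exact .cons (ih1 Δ hΓ) hV hs (ih2 Δ hΓ)

lemma Typed.narrow {x : String} {A A' : Ty} {Γ : TCtx} {t : Tm} {B : Ty}
    (hA : TySub A' A) (h : Typed ((x, A) :: Γ) t B) : Typed ((x, A') :: Γ) t B :=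
  h.narrow_append hA [] rfl

def RealizedBy (Γ : TCtx) (x : String) (t : Tm) : Ty → Prop
  | .prim (.arrow A B) ℓ => Typed ((x, A) :: Γ) t (B.raise ℓ)
  | .prim .int _ => False
  | .prim .code _ => False
  | .inter T1 T2 => RealizedBy Γ x t T1 ∧ RealizedBy Γ x t T2

namespace RealizedBy

variable {Γ : TCtx} {x : String} {t : Tm}

lemma iff_of_tyEq {T1 T2 : Ty} (h : TyEq T1 T2) :
    RealizedBy Γ x t T1 ↔ RealizedBy Γ x t T2 := by
  induction h with
  | refl => exact .rfl
  | symm _ ih => exact ih.symm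
  | trans _ _ ih1 ih2 => exact ih1.trans ih2
  | interCongr _ _ ih1 ih2 => exact and_congr ih1 ih2
  | arrowCongr h1 h2 =>
      exact ⟨fun hT => .sub (hT.narrow (.ofEq h1.symm)) (.ofEq (h2.raise _)),
        fun hT => .sub (hT.narrow (.ofEq h1)) (.ofEq (h2.symm.raise _))⟩
  | idem => exact and_self_iff.symm
  | comm => exact and_comm
  | assoc => exact and_assoc.symm
  | distrib =>
      exact ⟨fun ⟨h1, h2⟩ => .inter h1 h2,
        fun h => ⟨.sub h .interElim, .sub h .inter_right⟩⟩
  | @shift _ T ℓ' ℓ =>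
      show Typed _ _ ((T.raise ℓ').raise (ℓ + 1)) ↔ Typed _ _ ((T.raise (ℓ' + 1)).raise ℓ)
      rw [Ty.raise_raise, Ty.raise_raise, show ℓ' + (ℓ + 1) = ℓ' + 1 + ℓ by omega]

lemma of_tySub {T1 T2 : Ty} (h : TySub T1 T2) : RealizedBy Γ x t T1 → RealizedBy Γ x t T2 := by
  induction h with
  | int => exact False.elim
  | interElim => exact And.left
  | arrow h1 h2 => exact fun hT => .sub (hT.narrow h1) (h2.raise _)
  | mono _ _ ih1 ih2 => exact fun hT => ⟨ih1 hT.1, ih2 hT.2⟩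
  | trans _ _ ih1 ih2 => exact ih2 ∘ ih1
  | ofEq h => exact (iff_of_tyEq h).mp

lemma exists_tyEq_bigInter : ∀ {T : Ty}, RealizedBy Γ x t T →
    ∃ (p : Ty × Ty) (ps : List (Ty × Ty)),
      TyEq T (bigInter (arr0 p) (ps.map arr0)) ∧ ∀ q ∈ p :: ps, Typed ((x, q.1) :: Γ) t q.2
  | .prim (.arrow A B) ℓ, h =>
      ⟨(A, B.raise ℓ), [], TyEq.arrow_level_zero A B ℓ, by simpa [RealizedBy] using h⟩
  | .inter T1 T2, ⟨h1, h2⟩ => by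
      obtain ⟨p1, ps1, heq1, hbody1⟩ := exists_tyEq_bigInter h1
      obtain ⟨p2, ps2, heq2, hbody2⟩ := exists_tyEq_bigInter h2
      refine ⟨p1, ps1 ++ p2 :: ps2, ?_, fun q hq => ?_⟩
      · have := TyEq.inter_bigInter (arr0 p1) (arr0 p2) (ps1.map arr0) (ps2.map arr0)
        rw [← List.map_cons, ← List.map_append] at this
        exact (TyEq.interCongr heq1 heq2).trans this
      · have hq' : q ∈ (p1 :: ps1) ++ (p2 :: ps2) := hq
        exact (List.mem_append.mp hq').elim (hbody1 q) (hbody2 q)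

end RealizedBy

lemma Typed.realizedBy_of_lam {Γ : TCtx} {s : Tm} {T : Ty} (h : Typed Γ s T) :
    ∀ {x t}, s = .lam x t → RealizedBy Γ x t T := by
  induction h using Typed.rec (motive_2 := fun _ _ _ => True) with
  | abs _ hbody _ => rintro x t ⟨⟩; simpa [RealizedBy] using hbody
  | inter _ _ ih1 ih2 => exact fun hs => ⟨ih1 hs, ih2 hs⟩
  | sub _ hs ih => exact fun hs' => RealizedBy.of_tySub hs (ih hs')
  | nil | cons => trivial
  | _ => rintro _ _ ⟨⟩

/-- inversion for abstraction. -/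
theorem stmt6 (Γ : TCtx) (x : String) (t : Tm) (T : Ty)
    (h : Typed Γ (.lam x t) T) :
    ∃ (p : Ty × Ty) (ps : List (Ty × Ty)),
      TyEq T (bigInter (arr0 p) (ps.map arr0)) ∧
      ∀ q ∈ p :: ps, Typed ((x, q.1) :: Γ) t q.2 :=
  RealizedBy.exists_tyEq_bigInter (h.realizedBy_of_lam rfl)
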